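/- arXiv:2501.11799 — 3 statements merged into one kernel-verified Lean document; each statement's English description precedes it below -/
import Mathlib

section
/- Let A be a set of arguments with a symmetric attack relation R, let φ : A → ℕ be a proper colouring of A with respect to R, and let c : ℕ be any colour. Then the colour class {a | φ a = c} is an admissible set of arguments: it is conflict-free, and every argument in it is acceptable with respect to it. -/
/-- Proposition 1: the colour class of any colour in a proper colouring of a
conflict graph (symmetric attack relation) is an admissible set of arguments:
it is conflict-free and every argument in it is acceptable with respect to it. -/
theorem colour_class_admissible {A : Type*} (R : A → A → Prop)
    (hsym : ∀ a b, R a b → R b a)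
    (φ : A → ℕ) (hproper : ∀ a b, R a b → φ a ≠ φ b) (c : ℕ) :
    (¬ ∃ a ∈ {a : A | φ a = c}, ∃ b ∈ {a : A | φ a = c}, R a b) ∧
      (∀ a ∈ {a : A | φ a = c}, ∀ b, R b a → ∃ d ∈ {a : A | φ a = c}, R d b) := by
  constructor
  · rintro ⟨a, ha, b, hb, hab⟩
    exact hproper a b hab (ha.trans hb.symm)
  · intro a ha b hba
    exact ⟨a, ha, hsym b a hba⟩
end

section
/- Let A be a set of arguments with a symmetric attack relation R, and let S be a conflict-free set of arguments that is maximal with respect to inclusion among conflict-free sets (i.e., no strict superset of S is conflict-free). Then S is a complete extension. -/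
/-- Reformulation of Proposition 2: with a symmetric attack relation, every
inclusion-maximal conflict-free set is a complete extension. -/
theorem maximal_conflict_free_is_complete {A : Type*} (R : A → A → Prop)
    (hsym : ∀ a b, R a b → R b a) (S : Set A)
    (hcf : ¬ ∃ a ∈ S, ∃ b ∈ S, R a b)
    (hmax : ∀ T : Set A, S ⊆ T → (¬ ∃ a ∈ T, ∃ b ∈ T, R a b) → T = S) :
    ((¬ ∃ a ∈ S, ∃ b ∈ S, R a b) ∧
        (∀ a ∈ S, ∀ b, R b a → ∃ d ∈ S, R d b)) ∧
      (∀ a, (∀ b, R b a → ∃ d ∈ S, R d b) → a ∈ S) := by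
  refine ⟨⟨hcf, fun a ha b hba => ⟨a, ha, hsym b a hba⟩⟩, fun a hacc => ?_⟩
  by_contra haS
  have hT : ¬ ∃ x ∈ insert a S, ∃ y ∈ insert a S, R x y := by
    rintro ⟨x, hx, y, hy, hxy⟩
    rcases hx with rfl | hx
    · rcases hy with rfl | hy
      · obtain ⟨d, hd, hdx⟩ := hacc _ hxy
        obtain ⟨e, he, hed⟩ := hacc d hdx
        exact hcf ⟨e, he, d, hd, hed⟩
      · obtain ⟨d, hd, hdy⟩ := hacc y (hsym _ y hxy)
        exact hcf ⟨d, hd, y, hy, hdy⟩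
    · rcases hy with rfl | hy
      · obtain ⟨d, hd, hdx⟩ := hacc _ hxy
        exact hcf ⟨d, hd, x, hx, hdx⟩
      · exact hcf ⟨x, hx, y, hy, hxy⟩
  have := hmax (insert a S) (Set.subset_insert a S) hT
  exact haS (this ▸ Set.mem_insert a S)
end

section
/- Let A be a finite type of arguments with decidable equality, let R be a symmetric decidable attack relation on A, let φ : A → ℕ be a proper colouring with respect to R, let c : ℕ be a colour, and let S₀ be the finite colour class {a | φ a = c}. Let l be any list of elements of A containing every argument, and let T be the finite set obtained by folding over l starting from S₀, where at each argument v the current set S is replaced by insert v S if no w ∈ S satisfies R v w, and is left unchanged otherwise. Then T (viewed as a set of arguments) is a complete extension. -/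
section
variable {A : Type*} [Fintype A] [DecidableEq A]
  (R : A → A → Prop) [DecidableRel R]

private def crcStep (S : Finset A) (v : A) : Finset A :=
  if ∃ w ∈ S, R v w then S else insert v S

private lemma crc_subset_foldl (l : List A) (S : Finset A) :
    S ⊆ l.foldl (crcStep R) S := by
  induction l generalizing S with
  | nil => simp
  | cons v l ih =>
    intro a ha
    apply ih
    unfold crcStep
    split <;> simp [ha]

private lemma crc_cf_foldl (hsym : ∀ a b, R a b → R b a) (hirr : ∀ a, ¬ R a a)
    (l : List A) (S : Finset A) (hcf : ¬ ∃ a ∈ S, ∃ b ∈ S, R a b) :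
    ¬ ∃ a ∈ l.foldl (crcStep R) S, ∃ b ∈ l.foldl (crcStep R) S, R a b := by
  induction l generalizing S with
  | nil => exact hcf
  | cons v l ih =>
    apply ih
    unfold crcStep
    split
    · exact hcf
    · rename_i h
      rintro ⟨a, ha, b, hb, hab⟩
      simp only [Finset.mem_insert] at ha hb
      rcases ha with rfl | ha <;> rcases hb with rfl | hb
      · exact hirr _ hab
      · exact h ⟨b, hb, hab⟩
      · exact h ⟨a, ha, hsym _ _ hab⟩
      · exact hcf ⟨a, ha, b, hb, hab⟩

private lemma crc_cover_foldl (l : List A) (S : Finset A) (a : A) (ha : a ∈ l) :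
    a ∈ l.foldl (crcStep R) S ∨ ∃ w ∈ l.foldl (crcStep R) S, R a w := by
  induction l generalizing S with
  | nil => simp at ha
  | cons v l ih =>
    rw [List.foldl_cons]
    rcases List.mem_cons.mp ha with rfl | ha
    · by_cases h : ∃ w ∈ S, R a w
      · obtain ⟨w, hw, hrw⟩ := h
        exact Or.inr ⟨w, crc_subset_foldl R l _
          (by unfold crcStep; split <;> simp [hw]), hrw⟩
      · left
        apply crc_subset_foldl
        unfold crcStep
        rw [if_neg h]
        exact Finset.mem_insert_self a S
    · exact ih _ ha

end

/-- Proposition 2 for the completion loop of ColourResolveComplete: starting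
from the colour class of any colour of a proper colouring and processing all
vertices in any order, inserting each vertex that has no neighbour in the
current set, the resulting set is a complete extension. -/
theorem colourResolveComplete_complete {A : Type*} [Fintype A] [DecidableEq A]
    (R : A → A → Prop) [DecidableRel R] (hsym : ∀ a b, R a b → R b a)
    (φ : A → ℕ) (hproper : ∀ a b, R a b → φ a ≠ φ b) (c : ℕ)
    (S₀ : Finset A) (hS₀ : S₀ = Finset.univ.filter (fun a => φ a = c))
    (l : List A) (hl : ∀ a : A, a ∈ l)
    (T : Finset A)
    (hT : T = l.foldl (fun S v => if ∃ w ∈ S, R v w then S else insert v S) S₀) :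
    ((¬ ∃ a ∈ T, ∃ b ∈ T, R a b) ∧
        (∀ a ∈ T, ∀ b, R b a → ∃ d ∈ T, R d b)) ∧
      (∀ a : A, (∀ b, R b a → ∃ d ∈ T, R d b) → a ∈ T) := by
  have hT' : T = l.foldl (crcStep R) S₀ := hT
  have hirr : ∀ a, ¬ R a a := fun a ha => hproper a a ha rfl
  have hcf₀ : ¬ ∃ a ∈ S₀, ∃ b ∈ S₀, R a b := by
    rintro ⟨a, ha, b, hb, hab⟩
    simp [hS₀] at ha hb
    exact hproper a b hab (ha.trans hb.symm)
  have hcf : ¬ ∃ a ∈ T, ∃ b ∈ T, R a b := by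
    rw [hT']; exact crc_cf_foldl R hsym hirr l S₀ hcf₀
  have hcover : ∀ a : A, a ∈ T ∨ ∃ w ∈ T, R a w := by
    intro a
    rw [hT']
    exact crc_cover_foldl R l S₀ a (hl a)
  refine ⟨⟨hcf, ?_⟩, ?_⟩
  · intro a ha b hba
    rcases hcover b with hb | ⟨w, hw, hbw⟩
    · exact absurd ⟨b, hb, a, ha, hba⟩ hcf
    · exact ⟨w, hw, hsym _ _ hbw⟩
  · intro a hacc
    rcases hcover a with ha | ⟨w, hw, haw⟩
    · exact ha
    · obtain ⟨d, hd, hdw⟩ := hacc w (hsym _ _ haw)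
      exact absurd ⟨d, hd, w, hw, hdw⟩ hcf
end
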